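/- arXiv:1501.01507 — 2 statements merged into one kernel-verified Lean document; each statement's English description precedes it below -/
import Mathlib

section
/- Let V be a binary unitization of the GPEA P, let γ: P → P be the restriction to P of x ↦ x⁻⁻ in V, and let U be the γ-unitization of P. Then there exists a unique PEA-isomorphism φ: U → V which restricts to the identity on P, given by φa = a for a ∈ P and φx = (x⁻ in U)˜ in V for x ∈ U \ P. -/
open scoped Classical

/-- A generalized pseudo effect algebra: partial orthosummation modeled via `Option`. -/
structure GPEA (P : Type*) where
  oplus : P → P → Option P
  zero : P
  assoc₁ : ∀ {a b c ab s : P}, oplus a b = some ab → oplus ab c = some s →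
    ∃ bc, oplus b c = some bc ∧ oplus a bc = some s
  assoc₂ : ∀ {a b c bc s : P}, oplus b c = some bc → oplus a bc = some s →
    ∃ ab, oplus a b = some ab ∧ oplus ab c = some s
  conj : ∀ {a b s : P}, oplus a b = some s →
    (∃ c, oplus c a = some s) ∧ (∃ d, oplus b d = some s)
  cancel_right : ∀ {a b c s : P}, oplus a c = some s → oplus b c = some s → a = b
  cancel_left : ∀ {a b c s : P}, oplus c a = some s → oplus c b = some s → a = b
  oplus_zero : ∀ a : P, oplus a zero = some a
  zero_oplus : ∀ a : P, oplus zero a = some a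
  pos : ∀ {a b : P}, oplus a b = some zero → a = zero ∧ b = zero

namespace GPEA

variable {P Q : Type*}

/-- `a ≤ b` iff there is `c` with `a ⊕ c = b`. -/
def le (G : GPEA P) (a b : P) : Prop := ∃ c, G.oplus a c = some b

/-- `a ≤ b` (left version) iff there is `d` with `d ⊕ a = b`. -/
def leL (G : GPEA P) (a b : P) : Prop := ∃ d, G.oplus d a = some b

/-- An ideal: a nonempty, downward closed subset closed under existing orthosums. -/
def IsIdeal (G : GPEA P) (I : Set P) : Prop :=
  I.Nonempty ∧ (∀ a ∈ I, ∀ b : P, G.le b a → b ∈ I) ∧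
    (∀ a ∈ I, ∀ b ∈ I, ∀ s : P, G.oplus a b = some s → s ∈ I)

/-- A normal ideal: `a ⊕ c = c ⊕ b` implies `a ∈ I ↔ b ∈ I`. -/
def IsNormalIdeal (G : GPEA P) (I : Set P) : Prop :=
  G.IsIdeal I ∧ ∀ a b c s : P, G.oplus a c = some s → G.oplus c b = some s → (a ∈ I ↔ b ∈ I)

/-- Condition (R1) for an ideal. -/
def R1 (G : GPEA P) (I : Set P) : Prop :=
  ∀ i ∈ I, ∀ a b s : P, G.oplus a b = some s → G.le i s →
    ∃ j ∈ I, ∃ k ∈ I, G.le j a ∧ G.le k b ∧ ∃ t, G.oplus j k = some t ∧ G.le i t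

/-- Condition (R2) for an ideal. -/
def R2 (G : GPEA P) (I : Set P) : Prop :=
  ∀ i ∈ I, ∀ a : P, G.le i a →
    (∀ b x s : P, G.oplus x i = some a → G.oplus x b = some s →
      ∃ j ∈ I, G.le j b ∧ ∀ c, G.oplus j c = some b → ∃ t, G.oplus a c = some t) ∧
    (∀ b y s : P, G.oplus i y = some a → G.oplus b y = some s →
      ∃ k ∈ I, G.le k b ∧ ∀ z, G.oplus z k = some b → ∃ t, G.oplus z a = some t)

/-- A Riesz ideal is an ideal satisfying (R1) and (R2). -/
def IsRieszIdeal (G : GPEA P) (I : Set P) : Prop := G.IsIdeal I ∧ G.R1 I ∧ G.R2 I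

/-- A normal Riesz ideal. -/
def IsNormalRieszIdeal (G : GPEA P) (I : Set P) : Prop := G.IsNormalIdeal I ∧ G.R1 I ∧ G.R2 I

/-- A GPEA-morphism. -/
def IsMorphism (G : GPEA P) (H : GPEA Q) (φ : P → Q) : Prop :=
  ∀ a b s : P, G.oplus a b = some s → H.oplus (φ a) (φ b) = some (φ s)

/-- A unitizing GPEA-automorphism: a GPEA-automorphism `γ` such that
`γa ⊕ b` is defined iff `b ⊕ a` is defined. -/
def IsUnitizing (G : GPEA P) (γ : P → P) : Prop :=
  Function.Bijective γ ∧ G.IsMorphism G γ ∧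
    (∀ a b : P, (∃ s, G.oplus (γ a) (γ b) = some s) → ∃ t, G.oplus a b = some t) ∧
    (∀ a b : P, (∃ s, G.oplus (γ a) b = some s) ↔ ∃ t, G.oplus b a = some t)

/-- A weak congruence. -/
def IsWeakCong (G : GPEA P) (r : P → P → Prop) : Prop :=
  Equivalence r ∧ ∀ a b a₁ b₁ s s₁ : P, G.oplus a b = some s → G.oplus a₁ b₁ = some s₁ →
    r a a₁ → r b b₁ → r s s₁

/-- Condition (C3): a weak congruence satisfying it is a congruence. -/
def C3 (G : GPEA P) (r : P → P → Prop) : Prop :=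
  ∀ a b s : P, G.oplus a b = some s →
    (∀ a₁, r a a₁ → ∃ b₁, r b b₁ ∧ ∃ t, G.oplus a₁ b₁ = some t) ∧
    (∀ b₂, r b b₂ → ∃ a₂, r a a₂ ∧ ∃ t, G.oplus a₂ b₂ = some t)

/-- Condition (C4). -/
def C4 (G : GPEA P) (r : P → P → Prop) : Prop :=
  ∀ a b a₁ b₁ s t : P, r a b →
    ((G.oplus a a₁ = some s ∧ G.oplus b b₁ = some t ∧ r s t) ∨
      (G.oplus a₁ a = some s ∧ G.oplus b₁ b = some t ∧ r s t)) → r a₁ b₁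

/-- Condition (C5'). -/
def C5' (G : GPEA P) (r : P → P → Prop) : Prop :=
  ∀ a b c s : P, G.oplus b c = some s → r a s →
    ∃ a₁ a₂, r a₁ b ∧ r a₂ c ∧ G.oplus a₁ a₂ = some a

/-- Condition (CR): here `a \ c` is the unique `x` with `x ⊕ c = a`. -/
def CR (G : GPEA P) (r : P → P → Prop) : Prop :=
  ∀ a b : P, r a b → ∃ c d : P,
    G.le c a ∧ G.le a d ∧ G.le c b ∧ G.le b d ∧
    (∀ x, G.oplus x c = some a → r x G.zero) ∧
    (∀ x, G.oplus x c = some b → r x G.zero) ∧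
    (∀ x, G.oplus x a = some d → r x G.zero) ∧
    (∀ x, G.oplus x b = some d → r x G.zero)

/-- A Riesz congruence: a congruence satisfying (C4), (C5') and (CR). -/
def IsRieszCong (G : GPEA P) (r : P → P → Prop) : Prop :=
  G.IsWeakCong r ∧ G.C3 r ∧ G.C4 r ∧ G.C5' r ∧ G.CR r

/-- The relation `∼_I` induced by an ideal `I`: `a ∼_I b` iff there are
`i, j ∈ I` with `i ≤ a`, `j ≤ b` and `a \ i = b \ j`. -/
def simI (G : GPEA P) (I : Set P) (a b : P) : Prop :=
  ∃ i ∈ I, ∃ j ∈ I, ∃ d : P, G.oplus d i = some a ∧ G.oplus d j = some b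

/-- Condition (GCR) for the relation `∼_I`. -/
def GCR (G : GPEA P) (I : Set P) : Prop :=
  ∀ a b : P, G.simI I a b → ∃ i ∈ I, ∃ j ∈ I, ∃ s, G.oplus i a = some s ∧ G.oplus j b = some s

/-- The Riesz decomposition property. -/
def RDP (G : GPEA P) : Prop :=
  ∀ a b c d s : P, G.oplus a b = some s → G.oplus c d = some s →
    ∃ e₁₁ e₁₂ e₂₁ e₂₂ : P, G.oplus e₁₁ e₁₂ = some a ∧ G.oplus e₂₁ e₂₂ = some b ∧
      G.oplus e₁₁ e₂₁ = some c ∧ G.oplus e₁₂ e₂₂ = some d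

end GPEA

/-- A pseudo effect algebra: a GPEA with a largest element `1`. -/
structure PEA (P : Type*) extends GPEA P where
  one : P
  le_one : ∀ a : P, ∃ c, oplus a c = some one
  le_one' : ∀ a : P, ∃ d, oplus d a = some one

namespace PEA

variable {P : Type*}

/-- The right supplement `a˜`: the unique element with `a ⊕ a˜ = 1`. -/
noncomputable def rsup (U : PEA P) (a : P) : P := Classical.choose (U.le_one a)

/-- The left supplement `a⁻`: the unique element with `a⁻ ⊕ a = 1`. -/
noncomputable def lsup (U : PEA P) (a : P) : P := Classical.choose (U.le_one' a)

/-- A state on a PEA. -/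
def IsState (U : PEA P) (s : P → ℝ) : Prop :=
  (∀ a : P, 0 ≤ s a ∧ s a ≤ 1) ∧ s U.one = 1 ∧
    ∀ a b c : P, U.oplus a b = some c → s c = s a + s b

end PEA

/-- `U` is a binary unitization of the GPEA `G` via the embedding `ι`. -/
def IsBinaryUnitization {P Q : Type*} (G : GPEA P) (U : PEA Q) (ι : P → Q) : Prop :=
  Function.Injective ι ∧ ι G.zero = U.toGPEA.zero ∧
    (∀ a b : P, U.oplus (ι a) (ι b) = (G.oplus a b).map ι) ∧
    (∀ a : P, U.one ≠ ι a) ∧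
    (∀ x y : Q, x ∉ Set.range ι → y ∉ Set.range ι → U.oplus x y = none)

/-- The orthosummation of the `γ`-unitization on `P ⊕ P`
(`Sum.inl a` is `a ∈ P`, `Sum.inr b` is `ηb`). -/
noncomputable def uop {P : Type*} (G : GPEA P) (γ : P → P) :
    P ⊕ P → P ⊕ P → Option (P ⊕ P)
  | .inl a, .inl b => (G.oplus a b).map .inl
  | .inl a, .inr b => if h : G.leL a b then some (.inr (Classical.choose h)) else none
  | .inr a, .inl b => if h : G.le (γ b) a then some (.inr (Classical.choose h)) else none
  | .inr _, .inr _ => none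

/-- A PEA-isomorphism. -/
def IsPEAIso {A B : Type*} (U : PEA A) (V : PEA B) (φ : A → B) : Prop :=
  Function.Bijective φ ∧
    (∀ a b s : A, U.oplus a b = some s → V.oplus (φ a) (φ b) = some (φ s)) ∧
    (∀ a b : A, (∃ s, V.oplus (φ a) (φ b) = some s) → ∃ t, U.oplus a b = some t) ∧
    φ U.one = V.one

/-- The coordinatewise orthosummation on `I → P`. -/
noncomputable def piOplus {P : Type*} {I : Type*} (G : GPEA P) (f g : I → P) :
    Option (I → P) :=
  if h : ∀ i, ∃ s, G.oplus (f i) (g i) = some s then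
    some (fun i => Classical.choose (h i)) else none

/-- The extension `∼*` of a relation on `P` to `P ⊕ P`. -/
def rstar {P : Type*} (r : P → P → Prop) : P ⊕ P → P ⊕ P → Prop
  | .inl a, .inl b => r a b
  | .inr a, .inr b => r a b
  | _, _ => False

/-! In `V` the range of `ι` is downward closed for both orders: an element `x ∉ P` below some
`a ∈ P` would, together with a supplement of `a` (outside `P` by (U1) and (U2)), give a defined
sum of two elements outside `P`, against (U3). Hence every element outside `P` is a right supplement
`(ιb)˜`, so `φ = ι ⊔ (˜ ∘ ι)` is a bijection, and `ι` reflects both orders. The two mixed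
orthosums of the `γ`-unitization, `a ⊕ ηb = ηd` for `d ⊕ a = b` and `ηa ⊕ b = ηe` for
`γb ⊕ e = a`, then match the identities `a ⊕ b˜ = d˜` and `a˜ ⊕ b = e˜` of `V`, the second one
because `(ιb)⁻ = (ι(γb))˜`. Uniqueness: an isomorphism fixing `P` must send `ηb`, the right
supplement of `b` in `U`, to the right supplement of `b` in `V`. -/

namespace PEA

variable {P : Type*} (U : PEA P)

theorem oplus_rsup (a : P) : U.oplus a (U.rsup a) = some U.one :=
  Classical.choose_spec (U.le_one a)

variable {U}

theorem rsup_eq_of_oplus_eq_one {a x : P} (h : U.oplus a x = some U.one) : U.rsup a = x :=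
  U.cancel_left (U.oplus_rsup a) h

theorem rsup_injective : Function.Injective U.rsup := fun a b h =>
  U.cancel_right (U.oplus_rsup a) (h ▸ U.oplus_rsup b)

theorem rsup_zero : U.rsup U.zero = U.one :=
  rsup_eq_of_oplus_eq_one (U.zero_oplus U.one)

theorem oplus_eq_of_oplus_eq_one_left {e x l c w : P} (hex : U.oplus e x = some l)
    (hlc : U.oplus l c = some U.one) (hew : U.oplus e w = some U.one) :
    U.oplus x c = some w := by
  obtain ⟨v, hxc, hev⟩ := U.assoc₁ hex hlc
  rwa [U.cancel_left hev hew] at hxc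

theorem leL_of_oplus_of_oplus_eq_one {x c y l : P} (hxc : U.oplus x c = some y)
    (hlc : U.oplus l c = some U.one) : U.leL x l := by
  obtain ⟨v, hvy⟩ := U.le_one' y
  obtain ⟨m, hvx, hmc⟩ := U.assoc₂ hxc hvy
  exact ⟨v, U.cancel_right hmc hlc ▸ hvx⟩

theorem oplus_eq_of_oplus_eq_one_right {v c l a g : P} (hvc : U.oplus v c = some l)
    (hac : U.oplus a c = some U.one) (hgl : U.oplus g l = some U.one) :
    U.oplus g v = some a := by
  obtain ⟨m, hgv, hmc⟩ := U.assoc₂ hvc hgl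
  rwa [U.cancel_right hmc hac] at hgv

theorem apply_eq_of_oplus_eq_one {A B : Type*} {U : PEA A} {V : PEA B} {ψ : A → B}
    (hψ : U.IsMorphism V.toGPEA ψ) (hone : ψ U.one = V.one) {a x : A} {t : B}
    (hx : U.oplus a x = some U.one) (ht : V.oplus (ψ a) t = some V.one) : ψ x = t :=
  V.cancel_left (hone ▸ hψ a x U.one hx) ht

end PEA

namespace IsBinaryUnitization

variable {P Q : Type*} {G : GPEA P} {V : PEA Q} {ι : P → Q}

theorem oplus_eq_some_iff (hV : IsBinaryUnitization G V ι) {a b c : P} :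
    V.oplus (ι a) (ι b) = some (ι c) ↔ G.oplus a b = some c := by
  rw [hV.2.2.1, Option.map_eq_some_iff]
  exact ⟨fun ⟨d, hd, hdc⟩ => hV.1 hdc ▸ hd, fun h => ⟨c, h, rfl⟩⟩

theorem oplus_ne_one (hV : IsBinaryUnitization G V ι) {a b : P} {z : Q}
    (h : V.oplus (ι a) (ι b) = some z) : z ≠ V.one := by
  rintro rfl
  rw [hV.2.2.1, Option.map_eq_some_iff] at h
  obtain ⟨c, -, hc⟩ := h
  exact hV.2.2.2.1 c hc.symm

theorem mem_range_of_oplus_eq_some (hV : IsBinaryUnitization G V ι) {x y z : Q}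
    (h : V.oplus x y = some z) : x ∈ Set.range ι ∨ y ∈ Set.range ι := by
  by_contra! hxy
  simp [hV.2.2.2.2 x y hxy.1 hxy.2] at h

theorem notMem_range_of_oplus_eq_one_left (hV : IsBinaryUnitization G V ι) {x : Q} {b : P}
    (h : V.oplus x (ι b) = some V.one) : x ∉ Set.range ι := by
  rintro ⟨a, rfl⟩
  exact hV.oplus_ne_one h rfl

theorem notMem_range_of_oplus_eq_one_right (hV : IsBinaryUnitization G V ι) {x : Q} {b : P}
    (h : V.oplus (ι b) x = some V.one) : x ∉ Set.range ι := by
  rintro ⟨a, rfl⟩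
  exact hV.oplus_ne_one h rfl

theorem rsup_notMem_range (hV : IsBinaryUnitization G V ι) (b : P) :
    V.rsup (ι b) ∉ Set.range ι :=
  hV.notMem_range_of_oplus_eq_one_right (V.oplus_rsup (ι b))

theorem mem_range_of_oplus_eq_left (hV : IsBinaryUnitization G V ι) {x y : Q} {n : P}
    (h : V.oplus x y = some (ι n)) : x ∈ Set.range ι := by
  by_contra hx
  obtain ⟨l, hl⟩ := V.le_one' (ι n)
  obtain ⟨_, hlx, -⟩ := V.assoc₂ h hl
  exact hx ((hV.mem_range_of_oplus_eq_some hlx).resolve_left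
    (hV.notMem_range_of_oplus_eq_one_left hl))

theorem mem_range_of_oplus_eq_right (hV : IsBinaryUnitization G V ι) {x y : Q} {n : P}
    (h : V.oplus y x = some (ι n)) : x ∈ Set.range ι := by
  by_contra hx
  obtain ⟨_, hxr, -⟩ := V.assoc₁ h (V.oplus_rsup (ι n))
  exact hx ((hV.mem_range_of_oplus_eq_some hxr).resolve_right (hV.rsup_notMem_range n))

theorem leL_of_leL (hV : IsBinaryUnitization G V ι) {a b : P} (h : V.leL (ι a) (ι b)) :
    G.leL a b := by
  obtain ⟨x, hx⟩ := h
  obtain ⟨d, rfl⟩ := hV.mem_range_of_oplus_eq_left hx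
  exact ⟨d, hV.oplus_eq_some_iff.1 hx⟩

theorem le_of_le (hV : IsBinaryUnitization G V ι) {a b : P} (h : V.le (ι a) (ι b)) :
    G.le a b := by
  obtain ⟨x, hx⟩ := h
  obtain ⟨d, rfl⟩ := hV.mem_range_of_oplus_eq_right hx
  exact ⟨d, hV.oplus_eq_some_iff.1 hx⟩

theorem exists_rsup_eq (hV : IsBinaryUnitization G V ι) {x : Q} (hx : x ∉ Set.range ι) :
    ∃ b, V.rsup (ι b) = x := by
  obtain ⟨l, hl⟩ := V.le_one' x
  obtain ⟨b, rfl⟩ := (hV.mem_range_of_oplus_eq_some hl).resolve_right hx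
  exact ⟨b, PEA.rsup_eq_of_oplus_eq_one hl⟩

end IsBinaryUnitization

section Unitization

variable {P Q : Type*} {G : GPEA P} {γ : P → P}

theorem uop_inl_inr_eq_some_iff {a b : P} {s : P ⊕ P} :
    uop G γ (.inl a) (.inr b) = some s ↔ ∃ d, G.oplus d a = some b ∧ s = .inr d := by
  simp only [uop]
  split_ifs with h
  · refine ⟨fun hs => ⟨_, Classical.choose_spec h, (Option.some.inj hs).symm⟩, ?_⟩
    rintro ⟨d, hd, rfl⟩
    rw [G.cancel_right (Classical.choose_spec h) hd]
  · simpa using fun d hd _ => h ⟨d, hd⟩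

theorem uop_inr_inl_eq_some_iff {a b : P} {s : P ⊕ P} :
    uop G γ (.inr a) (.inl b) = some s ↔ ∃ e, G.oplus (γ b) e = some a ∧ s = .inr e := by
  simp only [uop]
  split_ifs with h
  · refine ⟨fun hs => ⟨_, Classical.choose_spec h, (Option.some.inj hs).symm⟩, ?_⟩
    rintro ⟨e, he, rfl⟩
    rw [G.cancel_left (Classical.choose_spec h) he]
  · simpa using fun e he _ => h ⟨e, he⟩

theorem uop_inl_inr_self (b : P) : uop G γ (.inl b) (.inr b) = some (.inr G.zero) :=
  uop_inl_inr_eq_some_iff.2 ⟨_, G.zero_oplus b, rfl⟩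

/-- The paper's `φx = (x⁻)˜`: in `U` the left supplement of `ηb` is `b`. -/
noncomputable def unitizationMap (V : PEA Q) (ι : P → Q) : P ⊕ P → Q :=
  Sum.elim ι fun b => V.rsup (ι b)

variable {V : PEA Q} {ι : P → Q}

theorem unitizationMap_bijective (hV : IsBinaryUnitization G V ι) :
    Function.Bijective (unitizationMap V ι) := by
  refine ⟨hV.1.sumElim (PEA.rsup_injective.comp hV.1)
    fun a b h => hV.rsup_notMem_range b ⟨a, h⟩, fun x => ?_⟩
  by_cases hx : x ∈ Set.range ι
  · obtain ⟨a, rfl⟩ := hx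
    exact ⟨.inl a, rfl⟩
  · obtain ⟨b, rfl⟩ := hV.exists_rsup_eq hx
    exact ⟨.inr b, rfl⟩

theorem unitizationMap_inr_zero (hV : IsBinaryUnitization G V ι) :
    unitizationMap V ι (.inr G.zero) = V.one := by
  show V.rsup (ι G.zero) = V.one
  rw [hV.2.1]
  exact PEA.rsup_zero

theorem unitizationMap_oplus (hV : IsBinaryUnitization G V ι)
    (hγ : ∀ a : P, ∃ l : Q, V.oplus l (ι a) = some V.one ∧ V.oplus (ι (γ a)) l = some V.one)
    {x y s : P ⊕ P} (h : uop G γ x y = some s) :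
    V.oplus (unitizationMap V ι x) (unitizationMap V ι y) = some (unitizationMap V ι s) := by
  rcases x with a | a <;> rcases y with b | b
  · obtain ⟨c, hc, rfl⟩ := Option.map_eq_some_iff.1 h
    exact hV.oplus_eq_some_iff.2 hc
  · obtain ⟨d, hd, rfl⟩ := uop_inl_inr_eq_some_iff.1 h
    exact PEA.oplus_eq_of_oplus_eq_one_left (hV.oplus_eq_some_iff.2 hd) (V.oplus_rsup _)
      (V.oplus_rsup _)
  · obtain ⟨e, he, rfl⟩ := uop_inr_inl_eq_some_iff.1 h
    obtain ⟨l, hl, hγl⟩ := hγ b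
    have hel : V.oplus (ι e) (V.rsup (ι a)) = some l :=
      PEA.oplus_eq_of_oplus_eq_one_left (hV.oplus_eq_some_iff.2 he) (V.oplus_rsup _) hγl
    exact PEA.oplus_eq_of_oplus_eq_one_left hel hl (V.oplus_rsup _)
  · simp [uop] at h

theorem exists_uop_of_unitizationMap_oplus (hV : IsBinaryUnitization G V ι)
    (hγ : ∀ a : P, ∃ l : Q, V.oplus l (ι a) = some V.one ∧ V.oplus (ι (γ a)) l = some V.one)
    {x y : P ⊕ P} {z : Q} (h : V.oplus (unitizationMap V ι x) (unitizationMap V ι y) = some z) :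
    ∃ s, uop G γ x y = some s := by
  rcases x with a | a <;> rcases y with b | b
  · obtain ⟨c, hc, -⟩ := Option.map_eq_some_iff.1 ((hV.2.2.1 a b).symm.trans h)
    exact ⟨.inl c, by simp [uop, hc]⟩
  · obtain ⟨d, hd⟩ :=
      hV.leL_of_leL (PEA.leL_of_oplus_of_oplus_eq_one h (V.oplus_rsup (ι b)))
    exact ⟨_, uop_inl_inr_eq_some_iff.2 ⟨d, hd, rfl⟩⟩
  · obtain ⟨l, hl, hγl⟩ := hγ b
    obtain ⟨v, hv⟩ := PEA.leL_of_oplus_of_oplus_eq_one h hl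
    obtain ⟨e, he⟩ :=
      hV.le_of_le ⟨v, PEA.oplus_eq_of_oplus_eq_one_right hv (V.oplus_rsup (ι a)) hγl⟩
    exact ⟨_, uop_inr_inl_eq_some_iff.2 ⟨e, he, rfl⟩⟩
  · exact ((hV.mem_range_of_oplus_eq_some h).elim (hV.rsup_notMem_range a)
      (hV.rsup_notMem_range b)).elim

end Unitization

theorem stmt9_general {P Q : Type*} (G : GPEA P) (V : PEA Q) (ι : P → Q)
    (hV : IsBinaryUnitization G V ι) (γ : P → P)
    (hγ : ∀ a : P, ∃ l : Q, V.oplus l (ι a) = some V.one ∧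
      V.oplus (ι (γ a)) l = some V.one)
    (U : PEA (P ⊕ P)) (hop : U.toGPEA.oplus = uop G γ)
    (ho : U.one = Sum.inr G.zero) :
    (∃! φ : P ⊕ P → Q, IsPEAIso U V φ ∧ ∀ a : P, φ (Sum.inl a) = ι a) ∧
    (∀ φ : P ⊕ P → Q, IsPEAIso U V φ → (∀ a : P, φ (Sum.inl a) = ι a) →
      ∀ (x : P ⊕ P) (b : P) (t : Q), x ∉ Set.range (Sum.inl : P → P ⊕ P) →
        U.oplus (Sum.inl b) x = some U.one → V.oplus (ι b) t = some V.one →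
        φ x = t) := by
  have hiso : IsPEAIso U V (unitizationMap V ι) :=
    ⟨unitizationMap_bijective hV, fun _ _ _ h => unitizationMap_oplus hV hγ (hop ▸ h),
      fun _ _ ⟨_, h⟩ => hop ▸ exists_uop_of_unitizationMap_oplus hV hγ h,
      ho ▸ unitizationMap_inr_zero hV⟩
  have hsupp : ∀ φ : P ⊕ P → Q, IsPEAIso U V φ → (∀ a : P, φ (Sum.inl a) = ι a) →
      ∀ (x : P ⊕ P) (b : P) (t : Q), U.oplus (Sum.inl b) x = some U.one →
        V.oplus (ι b) t = some V.one → φ x = t :=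
    fun φ hφ hφι x b t hx ht => PEA.apply_eq_of_oplus_eq_one hφ.2.1 hφ.2.2.2 hx (hφι b ▸ ht)
  refine ⟨⟨unitizationMap V ι, ⟨hiso, fun _ => rfl⟩, fun φ ⟨hφ, hφι⟩ => funext ?_⟩,
    fun φ hφ hφι x b t _ => hsupp φ hφ hφι x b t⟩
  rintro (a | b)
  · exact hφι a
  · exact hsupp φ hφ hφι _ b _ (by rw [hop, ho]; exact uop_inl_inr_self b) (V.oplus_rsup _)

theorem stmt9 {P Q : Type*} (G : GPEA P) (V : PEA Q) (ι : P → Q)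
    (hV : IsBinaryUnitization G V ι) (γ : P → P)
    (hγ : ∀ a : P, ∃ l : Q, V.oplus l (ι a) = some V.one ∧
      V.oplus (ι (γ a)) l = some V.one)
    (U : PEA (P ⊕ P)) (hop : U.toGPEA.oplus = uop G γ)
    (hz : U.toGPEA.zero = Sum.inl G.zero) (ho : U.one = Sum.inr G.zero) :
    (∃! φ : P ⊕ P → Q, IsPEAIso U V φ ∧ ∀ a : P, φ (Sum.inl a) = ι a) ∧
    (∀ φ : P ⊕ P → Q, IsPEAIso U V φ → (∀ a : P, φ (Sum.inl a) = ι a) →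
      ∀ (x : P ⊕ P) (b : P) (t : Q), x ∉ Set.range (Sum.inl : P → P ⊕ P) →
        U.oplus (Sum.inl b) x = some U.one → V.oplus (ι b) t = some V.one →
        φ x = t) :=
  stmt9_general G V ι hV γ hγ U hop ho
end

section
/- Let P be a GPEA with unitizing automorphism γ and let U be the γ-unitization of P. Then P is a normal Riesz ideal in U iff P is upward directed. -/
open scoped Classical

/-!
The unitization is graded by the number of `η`s: a sum is defined only if at most one summand
lies in `Pᵉ`, and then the sum lies in `Pᵉ` exactly when one summand does. So `P` is the degree
zero part, which makes it a normal ideal outright. The order of `U` restricted to `P` is that of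
`P`, and `a ≤ ηb` means that `b ⊕ a` exists. Applying (R1) to `a ≤ 1 = η(γb) ⊕ b` produces an
upper bound of `a` and `b` in `P`; conversely, an upper bound of the relevant pair of elements
of `P` furnishes the witnesses that (R1) and (R2) ask for.
-/

namespace GPEA

section Order

variable {P : Type*} (G : GPEA P) {a b c s t u : P}

theorem le_refl (a : P) : G.le a a := ⟨G.zero, G.oplus_zero a⟩

theorem le_trans (hab : G.le a b) (hbc : G.le b c) : G.le a c := by
  obtain ⟨x, hx⟩ := hab
  obtain ⟨y, hy⟩ := hbc
  obtain ⟨z, -, hz⟩ := G.assoc₁ hx hy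
  exact ⟨z, hz⟩

theorem le_iff_leL : G.le a b ↔ G.leL a b :=
  ⟨fun ⟨_, h⟩ => (G.conj h).1, fun ⟨_, h⟩ => (G.conj h).2⟩

theorem le_of_oplus_eq_some_right (h : G.oplus a b = some s) : G.le b s :=
  G.le_iff_leL.2 ⟨a, h⟩

theorem oplus_le_oplus_left (hat : G.oplus a c = some t) (hcb : G.le c b)
    (hab : G.oplus a b = some s) : G.le t s := by
  obtain ⟨d, hcd⟩ := hcb
  obtain ⟨t', hat', ht's⟩ := G.assoc₂ hcd hab
  obtain rfl : t' = t := Option.some.inj (hat'.symm.trans hat)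
  exact ⟨d, ht's⟩

theorem le_of_oplus_le_oplus_left (hsa : G.oplus s a = some b) (hst : G.oplus s t = some u)
    (hbu : G.le b u) : G.le a t := by
  obtain ⟨d, hbd⟩ := hbu
  obtain ⟨r, hadr, hsr⟩ := G.assoc₁ hsa hbd
  obtain rfl : r = t := G.cancel_left hsr hst
  exact ⟨d, hadr⟩

theorem le_of_oplus_le_oplus_right (has : G.oplus a s = some b) (hts : G.oplus t s = some u)
    (hbu : G.le b u) : G.le a t := by
  obtain ⟨d, hdb⟩ := G.le_iff_leL.1 hbu
  obtain ⟨r, hdar, hrs⟩ := G.assoc₂ has hdb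
  obtain rfl : r = t := G.cancel_right hrs hts
  exact G.le_iff_leL.2 ⟨d, hdar⟩

end Order

theorem isNormalIdeal_setOf_degree_eq_zero {Q : Type*} (U : GPEA Q) (deg : Q → ℕ)
    (hdeg : ∀ {x y s : Q}, U.oplus x y = some s → deg s = deg x + deg y) :
    U.IsNormalIdeal {x | deg x = 0} := by
  refine ⟨⟨⟨U.zero, ?_⟩, ?_, ?_⟩, ?_⟩
  · have := hdeg (U.oplus_zero U.zero)
    simp only [Set.mem_ofPred_eq]
    omega
  · rintro a ha b ⟨c, hc⟩
    have := hdeg hc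
    simp only [Set.mem_ofPred_eq] at ha ⊢
    omega
  · rintro a ha b hb s hs
    have := hdeg hs
    simp only [Set.mem_ofPred_eq] at ha hb ⊢
    omega
  · intro a b c s hac hcb
    have := hdeg hac
    have := hdeg hcb
    simp only [Set.mem_ofPred_eq]
    omega

namespace IsUnitizing

variable {P : Type*} {G : GPEA P} {γ : P → P}

theorem surjective (hγ : G.IsUnitizing γ) : Function.Surjective γ := hγ.1.2

theorem exists_oplus_map_left_iff (hγ : G.IsUnitizing γ) (a b : P) :
    (∃ s, G.oplus (γ a) b = some s) ↔ ∃ t, G.oplus b a = some t :=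
  hγ.2.2.2 a b

theorem oplus_eq_some_of_map (hγ : G.IsUnitizing γ) {a b c : P}
    (h : G.oplus (γ a) (γ b) = some (γ c)) : G.oplus a b = some c := by
  obtain ⟨t, ht⟩ := hγ.2.2.1 a b ⟨_, h⟩
  obtain rfl : t = c := hγ.1.1 (Option.some.inj ((hγ.2.1 a b t ht).symm.trans h))
  exact ht

end IsUnitizing

end GPEA

section Unitization

open Sum

variable {P : Type*} {G : GPEA P} {γ : P → P} {a b c : P} {s : P ⊕ P}

theorem uop_inl_inl_eq_some :
    uop G γ (inl a) (inl b) = some s ↔ ∃ v, s = inl v ∧ G.oplus a b = some v := by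
  simp only [uop, Option.map_eq_some_iff]
  exact ⟨fun ⟨v, h, hv⟩ => ⟨v, hv.symm, h⟩, fun ⟨v, hv, h⟩ => ⟨v, h, hv.symm⟩⟩

theorem uop_inl_inr_eq_some :
    uop G γ (inl a) (inr c) = some s ↔ ∃ v, s = inr v ∧ G.oplus v a = some c := by
  simp only [uop]
  constructor
  · intro h
    split_ifs at h with hac
    exact ⟨_, (Option.some.inj h).symm, Classical.choose_spec hac⟩
  · rintro ⟨v, rfl, hv⟩
    rw [dif_pos ⟨v, hv⟩, G.cancel_right (Classical.choose_spec (⟨v, hv⟩ : G.leL a c)) hv]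

theorem uop_inr_inl_eq_some :
    uop G γ (inr c) (inl a) = some s ↔ ∃ v, s = inr v ∧ G.oplus (γ a) v = some c := by
  simp only [uop]
  constructor
  · intro h
    split_ifs at h with hac
    exact ⟨_, (Option.some.inj h).symm, Classical.choose_spec hac⟩
  · rintro ⟨v, rfl, hv⟩
    rw [dif_pos ⟨v, hv⟩, G.cancel_left (Classical.choose_spec (⟨v, hv⟩ : G.le (γ a) c)) hv]

theorem uop_inr_inr : uop G γ (inr c) (inr b) = none := rfl

def etaDegree : P ⊕ P → ℕ := Sum.elim (fun _ => 0) (fun _ => 1)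

theorem range_inl_eq_setOf_etaDegree_eq_zero :
    Set.range (inl : P → P ⊕ P) = {x | etaDegree x = 0} := by
  ext (x | x) <;> simp [etaDegree]

theorem etaDegree_of_uop_eq_some {x y : P ⊕ P} (h : uop G γ x y = some s) :
    etaDegree s = etaDegree x + etaDegree y := by
  rcases x with x | x <;> rcases y with y | y
  · obtain ⟨v, rfl, -⟩ := uop_inl_inl_eq_some.1 h; rfl
  · obtain ⟨v, rfl, -⟩ := uop_inl_inr_eq_some.1 h; rfl
  · obtain ⟨v, rfl, -⟩ := uop_inr_inl_eq_some.1 h; rfl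
  · simp [uop_inr_inr] at h

variable {U : GPEA (P ⊕ P)}

theorem oplus_inl_inl (hop : U.oplus = uop G γ) {v : P} (h : G.oplus a b = some v) :
    U.oplus (inl a) (inl b) = some (inl v) :=
  hop ▸ uop_inl_inl_eq_some.2 ⟨v, rfl, h⟩

theorem le_inl_inl_iff (hop : U.oplus = uop G γ) : U.le (inl a) (inl b) ↔ G.le a b := by
  constructor
  · rintro ⟨x | x, hx⟩ <;> rw [hop] at hx
    · obtain ⟨v, hv, hax⟩ := uop_inl_inl_eq_some.1 hx
      obtain rfl := inl_injective hv
      exact ⟨x, hax⟩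
    · obtain ⟨v, hv, -⟩ := uop_inl_inr_eq_some.1 hx
      exact absurd hv inl_ne_inr
  · rintro ⟨x, hx⟩
    exact ⟨inl x, oplus_inl_inl hop hx⟩

theorem le_inl_inr_iff (hop : U.oplus = uop G γ) :
    U.le (inl a) (inr c) ↔ ∃ t, G.oplus c a = some t := by
  constructor
  · rintro ⟨x | x, hx⟩ <;> rw [hop] at hx
    · obtain ⟨v, hv, -⟩ := uop_inl_inl_eq_some.1 hx
      exact absurd hv.symm inl_ne_inr
    · obtain ⟨v, hv, hca⟩ := uop_inl_inr_eq_some.1 hx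
      obtain rfl := inr_injective hv
      exact ⟨x, hca⟩
  · rintro ⟨t, ht⟩
    exact ⟨inr t, hop ▸ uop_inl_inr_eq_some.2 ⟨c, rfl, ht⟩⟩

theorem isNormalIdeal_range_inl (hop : U.oplus = uop G γ) :
    U.IsNormalIdeal (Set.range inl) := by
  rw [range_inl_eq_setOf_etaDegree_eq_zero]
  exact U.isNormalIdeal_setOf_degree_eq_zero etaDegree
    fun h => etaDegree_of_uop_eq_some (hop ▸ h)

theorem r1_range_inl (hγ : G.IsUnitizing γ) (hop : U.oplus = uop G γ)
    (hdir : ∀ a b : P, ∃ c, G.le a c ∧ G.le b c) : U.R1 (Set.range inl) := by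
  rintro _ ⟨i, rfl⟩ (a | a) (b | b) s hs his <;> rw [hop] at hs
  · exact ⟨inl a, ⟨a, rfl⟩, inl b, ⟨b, rfl⟩, U.le_refl _, U.le_refl _, s, hop ▸ hs, his⟩
  · obtain ⟨s, rfl, hsa⟩ := uop_inl_inr_eq_some.1 hs
    obtain ⟨c, hsi⟩ := (le_inl_inr_iff hop).1 his
    obtain ⟨u, ⟨v, hbv⟩, hcu⟩ := hdir b c
    obtain ⟨t, hav, hst⟩ := G.assoc₁ hsa hbv
    exact ⟨inl a, ⟨a, rfl⟩, inl v, ⟨v, rfl⟩, U.le_refl _, (le_inl_inr_iff hop).2 ⟨u, hbv⟩,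
      inl t, oplus_inl_inl hop hav,
      (le_inl_inl_iff hop).2 (G.le_of_oplus_le_oplus_left hsi hst hcu)⟩
  · obtain ⟨s, rfl, hbs⟩ := uop_inr_inl_eq_some.1 hs
    obtain ⟨c, hsi⟩ := (le_inl_inr_iff hop).1 his
    -- pulled back along `γ`, both `b` and `i` get `s` added on the right
    obtain ⟨g, rfl⟩ := hγ.surjective a
    obtain ⟨s, rfl⟩ := hγ.surjective s
    replace hbs := hγ.oplus_eq_some_of_map hbs
    obtain ⟨c, his⟩ := (hγ.exists_oplus_map_left_iff s i).1 ⟨c, hsi⟩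
    obtain ⟨u, hgu, hcu⟩ := hdir g c
    obtain ⟨q, hqg⟩ := G.le_iff_leL.1 hgu
    obtain ⟨t, hqb, hts⟩ := G.assoc₂ hbs hqg
    exact ⟨inl q, ⟨q, rfl⟩, inl b, ⟨b, rfl⟩,
      (le_inl_inr_iff hop).2 ((hγ.exists_oplus_map_left_iff g q).2 ⟨u, hqg⟩), U.le_refl _,
      inl t, oplus_inl_inl hop hqb,
      (le_inl_inl_iff hop).2 (G.le_of_oplus_le_oplus_right his hts hcu)⟩
  · simp [uop_inr_inr] at hs

theorem r2_range_inl (hγ : G.IsUnitizing γ) (hop : U.oplus = uop G γ)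
    (hdir : ∀ a b : P, ∃ c, G.le a c ∧ G.le b c) : U.R2 (Set.range inl) := by
  rintro _ ⟨i, rfl⟩ a -
  constructor
  · rintro (b | b) x s hxi hxb
    · exact ⟨inl b, ⟨b, rfl⟩, U.le_refl _,
        fun c hc => ⟨a, U.cancel_left hc (U.oplus_zero _) ▸ U.oplus_zero a⟩⟩
    rcases x with x | x <;> rw [hop] at hxi hxb
    · obtain ⟨a, rfl, -⟩ := uop_inl_inl_eq_some.1 hxi
      obtain ⟨u, hau, j, hbj⟩ := hdir a b
      have hju : U.oplus (inl j) (inr u) = some (inr b) :=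
        hop ▸ uop_inl_inr_eq_some.2 ⟨b, rfl, hbj⟩
      refine ⟨inl j, ⟨j, rfl⟩, ⟨inr u, hju⟩, fun c hc => ?_⟩
      obtain ⟨v, hvau⟩ := G.le_iff_leL.1 hau
      exact ⟨inr v, U.cancel_left hc hju ▸ hop ▸ uop_inl_inr_eq_some.2 ⟨v, rfl, hvau⟩⟩
    · simp [uop_inr_inr] at hxb
  · rintro (b | b) y s hiy hby
    · exact ⟨inl b, ⟨b, rfl⟩, U.le_refl _,
        fun z hz => ⟨a, U.cancel_right hz (U.zero_oplus _) ▸ U.zero_oplus a⟩⟩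
    rcases y with y | y <;> rw [hop] at hiy hby
    · obtain ⟨a, rfl, -⟩ := uop_inl_inl_eq_some.1 hiy
      obtain ⟨c, hbc, w, hac⟩ := hdir b (γ a)
      obtain ⟨k, hkb⟩ := G.le_iff_leL.1 hbc
      obtain ⟨k, rfl⟩ := hγ.surjective k
      have hck : U.oplus (inr c) (inl k) = some (inr b) :=
        hop ▸ uop_inr_inl_eq_some.2 ⟨b, rfl, hkb⟩
      refine ⟨inl k, ⟨k, rfl⟩,
        (le_inl_inr_iff hop).2 ((hγ.exists_oplus_map_left_iff k b).1 ⟨c, hkb⟩), fun z hz => ?_⟩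
      exact ⟨inr w, U.cancel_right hz hck ▸ hop ▸ uop_inr_inl_eq_some.2 ⟨w, rfl, hac⟩⟩
    · simp [uop_inr_inr] at hby

theorem exists_le_and_le_of_r1_range_inl (hγ : G.IsUnitizing γ) (hop : U.oplus = uop G γ)
    (hR1 : U.R1 (Set.range inl)) (a b : P) : ∃ c, G.le a c ∧ G.le b c := by
  have hsum : U.oplus (inr (γ b)) (inl b) = some (inr G.zero) :=
    hop ▸ uop_inr_inl_eq_some.2 ⟨G.zero, rfl, G.oplus_zero _⟩
  have ha : U.le (inl a) (inr G.zero) := (le_inl_inr_iff hop).2 ⟨a, G.zero_oplus a⟩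
  obtain ⟨_, ⟨j, rfl⟩, _, ⟨k, rfl⟩, hj, hk, t, hjk, hat⟩ := hR1 _ ⟨a, rfl⟩ _ _ _ hsum ha
  obtain ⟨m, hjb⟩ := (hγ.exists_oplus_map_left_iff b j).1 ((le_inl_inr_iff hop).1 hj)
  rw [hop] at hjk
  obtain ⟨t, rfl, hjt⟩ := uop_inl_inl_eq_some.1 hjk
  have htm : G.le t m := G.oplus_le_oplus_left hjt ((le_inl_inl_iff hop).1 hk) hjb
  exact ⟨m, G.le_trans ((le_inl_inl_iff hop).1 hat) htm, G.le_of_oplus_eq_some_right hjb⟩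

end Unitization

theorem stmt14_general {P : Type*} (G : GPEA P) (γ : P → P) (hγ : G.IsUnitizing γ)
    (U : PEA (P ⊕ P)) (hop : U.toGPEA.oplus = uop G γ) :
    U.toGPEA.IsNormalRieszIdeal (Set.range (Sum.inl : P → P ⊕ P)) ↔
      ∀ a b : P, ∃ c, G.le a c ∧ G.le b c :=
  ⟨fun h => exists_le_and_le_of_r1_range_inl hγ hop h.2.1,
    fun hdir => ⟨isNormalIdeal_range_inl hop, r1_range_inl hγ hop hdir, r2_range_inl hγ hop hdir⟩⟩

theorem stmt14 {P : Type*} (G : GPEA P) (γ : P → P) (hγ : G.IsUnitizing γ)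
    (U : PEA (P ⊕ P)) (hop : U.toGPEA.oplus = uop G γ)
    (hz : U.toGPEA.zero = Sum.inl G.zero) (ho : U.one = Sum.inr G.zero) :
    U.toGPEA.IsNormalRieszIdeal (Set.range (Sum.inl : P → P ⊕ P)) ↔
      ∀ a b : P, ∃ c, G.le a c ∧ G.le b c :=
  stmt14_general G γ hγ U hop
end
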